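/- Let ρ and σ be quantum states on ℂ^d with supp(ρ) = supp(σ) and D(ρ‖σ) > 0. Let m ≥ 1, t₁,…,t_m ∈ [0,1] and w₁,…,w_m > 0 be such that r_m(x) := (1/ln 2)·Σ_{j=1}^m w_j f_{t_j}(x) satisfies, for all x > 0, −r_m(x) − (1/(m² ln 2))·(1/x + x − 2) ≤ −log₂ x ≤ −r_m(x). Suppose ε_V ≥ 0 and real numbers D̂₁,…,D̂_m satisfy |D̂_j − D_{f_{t_j}}(ρ‖σ)| ≤ ε_V·|D_{f_{t_j}}(ρ‖σ)| for every j, and set D̂(ρ‖σ) := −Σ_{j=1}^m (w_j/ln 2)·D̂_j. Then |D̂(ρ‖σ) − D(ρ‖σ)| / D(ρ‖σ) ≤ C·(1+ε_V)/m² + ε_V, где C := (Q₀(ρ‖σ) + Q₂(ρ‖σ)) / (D(ρ‖σ)·ln 2), Q₀(ρ‖σ) = tr[ρ⁰σ] with ρ⁰ the projection onto supp(ρ), and Q₂(ρ‖σ) = tr[ρ² σ⁺] with σ⁺ the Moore–Penrose pseudo-inverse of σ. -/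

import Mathlib

/-!
In the eigenbases `ρ = Σ η_j P_j`, `σ = Σ μ_k Q_k`, the map `f ↦ D_f(ρ‖σ)` is the positive
linear functional `f ↦ Σ η_j tr[P_j Q_k] f(μ_k/η_j)` (over `η_j, μ_k > 0`), and every
quantity of the statement is of this form: `D = D_{-log₂}`, `Q₀ = D_x`, `Q₂ = D_{1/x}`, and,
because the supports agree, `D_1 = tr ρ = 1 = tr σ = D_x`. Applied to the two-sided
approximation of `-log₂` by `-r_m`, it squeezes `S = -Σ (w_j / ln 2) D_{f_{t_j}}` between `D`
and `D + (Q₀ + Q₂)/(m² ln 2)`. Since `f_t(x) ≤ x - 1`, each `D_{f_t} ≤ D_{x-1} = 0`, so the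
estimation errors add up to at most `ε_V S`, and the triangle inequality through `S` gives the
bound.
-/
noncomputable section

namespace QRE

open scoped ComplexOrder

open Matrix

variable {d : ℕ}

/-- The rank-one projector `|u⟩⟨u|` associated with a vector `u ∈ ℂ^d`. -/
def rankOne (u : EuclideanSpace ℂ (Fin d)) : Matrix (Fin d) (Fin d) ℂ :=
  Matrix.of fun i j => u i * (starRingEnd ℂ) (u j)

/-- Functional calculus on the support of a Hermitian matrix: apply `g` to the
positive eigenvalues, and `0` to the rest. -/
def matFun (g : ℝ → ℝ) {A : Matrix (Fin d) (Fin d) ℂ} (hA : A.IsHermitian) :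
    Matrix (Fin d) (Fin d) ℂ :=
  ∑ j, (if 0 < hA.eigenvalues j then (g (hA.eigenvalues j) : ℂ) else 0) •
    rankOne (hA.eigenvectorBasis j)

/-- The orthogonal projection onto the support (column space) of a Hermitian matrix. -/
def suppProj {A : Matrix (Fin d) (Fin d) ℂ} (hA : A.IsHermitian) :
    Matrix (Fin d) (Fin d) ℂ :=
  matFun (fun _ => 1) hA

/-- The standard quantum `f`-divergence (for `supp ρ ⊆ supp σ`, where the `f(0⁺)` term
vanishes): `D_f(ρ‖σ) = Σ_{j : η_j > 0} Σ_{k : μ_k > 0} η_j f(μ_k/η_j) tr[P_j Q_k]`. -/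
def Df (f : ℝ → ℝ) {ρ σ : Matrix (Fin d) (Fin d) ℂ}
    (hρ : ρ.IsHermitian) (hσ : σ.IsHermitian) : ℝ :=
  ∑ j, ∑ k,
    if 0 < hρ.eigenvalues j ∧ 0 < hσ.eigenvalues k then
      hρ.eigenvalues j * f (hσ.eigenvalues k / hρ.eigenvalues j) *
        (Matrix.trace (rankOne (hρ.eigenvectorBasis j) *
          rankOne (hσ.eigenvectorBasis k))).re
    else 0

/-- `f_t(x) = (x-1)/(t(x-1)+1)`. -/
def ft (t x : ℝ) : ℝ := (x - 1) / (t * (x - 1) + 1)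

/-- A quantum state: positive semidefinite with unit trace. -/
def IsState (ρ : Matrix (Fin d) (Fin d) ℂ) : Prop := ρ.PosSemidef ∧ ρ.trace = 1

/-- The Umegaki relative entropy `tr[ρ (log₂ ρ − log₂ σ)]` (logs on the supports). -/
def relEnt {ρ σ : Matrix (Fin d) (Fin d) ℂ} (hρ : ρ.IsHermitian) (hσ : σ.IsHermitian) : ℝ :=
  (Matrix.trace (ρ * (matFun (Real.logb 2) hρ - matFun (Real.logb 2) hσ))).re

/-- `Q_α(ρ‖σ) = tr[ρ^α σ^{1-α}]`, matrix powers by functional calculus on the support. -/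
def Qalpha (α : ℝ) {ρ σ : Matrix (Fin d) (Fin d) ℂ}
    (hρ : ρ.IsHermitian) (hσ : σ.IsHermitian) : ℝ :=
  (Matrix.trace (matFun (fun y => y ^ α) hρ * matFun (fun y => y ^ (1 - α)) hσ)).re

/-- `Q₀(ρ‖σ) = tr[ρ⁰ σ]`. -/
def Qzero {ρ : Matrix (Fin d) (Fin d) ℂ} (hρ : ρ.IsHermitian)
    (σ : Matrix (Fin d) (Fin d) ℂ) : ℝ :=
  (Matrix.trace (suppProj hρ * σ)).re

/-- `Q₂(ρ‖σ) = tr[ρ² σ⁺]`, with `σ⁺` the Moore–Penrose pseudo-inverse of `σ`. -/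
def Qtwo (ρ : Matrix (Fin d) (Fin d) ℂ) {σ : Matrix (Fin d) (Fin d) ℂ}
    (hσ : σ.IsHermitian) : ℝ :=
  (Matrix.trace (ρ * ρ * matFun (fun y => y⁻¹) hσ)).re

section RankOne

variable (u v : EuclideanSpace ℂ (Fin d))

theorem trace_rankOne : trace (rankOne u) = inner ℂ u u := by
  simp only [Matrix.trace, Matrix.diag, rankOne, Matrix.of_apply, PiLp.inner_apply,
    RCLike.inner_apply]

theorem trace_rankOne_mul_rankOne :
    trace (rankOne u * rankOne v) = inner ℂ u v * inner ℂ v u := by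
  simp only [Matrix.trace, Matrix.diag, Matrix.mul_apply, rankOne, Matrix.of_apply,
    PiLp.inner_apply, RCLike.inner_apply]
  rw [Finset.sum_comm, Finset.sum_mul]
  refine Finset.sum_congr rfl fun l _ => ?_
  rw [Finset.mul_sum]
  exact Finset.sum_congr rfl fun i _ => by ring

theorem trace_rankOne_mul_rankOne_eq_ofReal :
    trace (rankOne u * rankOne v) = ((‖(inner ℂ u v : ℂ)‖ ^ 2 : ℝ) : ℂ) := by
  rw [trace_rankOne_mul_rankOne, ← inner_conj_symm v u, Complex.mul_conj,
    Complex.normSq_eq_norm_sq]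

theorem re_trace_rankOne_mul_rankOne :
    (trace (rankOne u * rankOne v)).re = ‖(inner ℂ u v : ℂ)‖ ^ 2 := by
  rw [trace_rankOne_mul_rankOne_eq_ofReal, Complex.ofReal_re]

theorem rankOne_mul_rankOne :
    rankOne u * rankOne v = inner ℂ u v • Matrix.of fun i j => u i * starRingEnd ℂ (v j) := by
  ext i j
  simp only [Matrix.mul_apply, rankOne, Matrix.of_apply, Matrix.smul_apply,
    PiLp.inner_apply, RCLike.inner_apply, smul_eq_mul, Finset.sum_mul]
  exact Finset.sum_congr rfl fun l _ => by ring

end RankOne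

section Spectral

variable {A B : Matrix (Fin d) (Fin d) ℂ}

theorem rankOne_eigenvectorBasis_mul (hA : A.IsHermitian) (j k : Fin d) :
    rankOne (hA.eigenvectorBasis j) * rankOne (hA.eigenvectorBasis k) =
      if j = k then rankOne (hA.eigenvectorBasis j) else 0 := by
  rw [rankOne_mul_rankOne, orthonormal_iff_ite.mp hA.eigenvectorBasis.orthonormal]
  split_ifs with hjk
  · subst hjk; rw [one_smul]; rfl
  · rw [zero_smul]

theorem matFun_mul_matFun (g h : ℝ → ℝ) (hA : A.IsHermitian) :
    matFun g hA * matFun h hA = matFun (fun y => g y * h y) hA := by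
  rw [matFun, matFun, matFun, Finset.sum_mul]
  refine Finset.sum_congr rfl fun j _ => ?_
  simp only [Finset.mul_sum, smul_mul_assoc, mul_smul_comm, smul_smul,
    rankOne_eigenvectorBasis_mul, smul_ite, smul_zero, Finset.sum_ite_eq, Finset.mem_univ,
    if_true]
  split_ifs <;> simp [mul_comm]

theorem eq_sum_eigenvalues_smul_rankOne (hA : A.IsHermitian) :
    A = ∑ j, (hA.eigenvalues j : ℂ) • rankOne (hA.eigenvectorBasis j) := by
  nth_rewrite 1 [hA.spectral_theorem]
  ext i i'
  simp only [Unitary.conjStarAlgAut_apply, Matrix.mul_apply, Matrix.diagonal_apply,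
    Matrix.star_apply, Matrix.sum_apply, Matrix.smul_apply, rankOne, Matrix.of_apply, smul_eq_mul,
    Matrix.IsHermitian.eigenvectorUnitary_apply, Function.comp_apply]
  refine Finset.sum_congr rfl fun j _ => ?_
  simp only [mul_ite, mul_zero, Finset.sum_ite_eq', Finset.mem_univ, if_true]
  exact (mul_assoc _ _ _).trans (mul_left_comm _ _ _)

theorem eq_matFun_id_of_posSemidef (hA : A.PosSemidef) : A = matFun (fun y => y) hA.1 := by
  nth_rewrite 1 [eq_sum_eigenvalues_smul_rankOne hA.1]
  refine Finset.sum_congr rfl fun j _ => ?_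
  split_ifs with hj
  · rfl
  · rw [le_antisymm (not_lt.mp hj) (hA.eigenvalues_nonneg j), Complex.ofReal_zero]

theorem re_trace_matFun (g : ℝ → ℝ) (hA : A.IsHermitian) :
    (trace (matFun g hA)).re = ∑ j, if 0 < hA.eigenvalues j then g (hA.eigenvalues j) else 0 := by
  simp only [matFun, Matrix.trace_sum, Matrix.trace_smul, trace_rankOne, Complex.re_sum,
    inner_self_eq_norm_sq_to_K, hA.eigenvectorBasis.orthonormal.1, smul_eq_mul]
  refine Finset.sum_congr rfl fun j _ => ?_
  split_ifs <;> simp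

theorem re_trace_matFun_mul_matFun (g h : ℝ → ℝ) (hA : A.IsHermitian) (hB : B.IsHermitian) :
    (trace (matFun g hA * matFun h hB)).re =
      ∑ j, ∑ k, if 0 < hA.eigenvalues j ∧ 0 < hB.eigenvalues k then
        g (hA.eigenvalues j) * h (hB.eigenvalues k) *
          (trace (rankOne (hA.eigenvectorBasis j) * rankOne (hB.eigenvectorBasis k))).re
      else 0 := by
  rw [matFun, matFun, Finset.sum_mul]
  simp only [Finset.mul_sum, smul_mul_assoc, mul_smul_comm, smul_smul, Matrix.trace_sum,
    Complex.re_sum]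
  refine Finset.sum_congr rfl fun j _ => Finset.sum_congr rfl fun k _ => ?_
  rw [Matrix.trace_smul, trace_rankOne_mul_rankOne_eq_ofReal, smul_eq_mul, Complex.ofReal_re]
  split_ifs with hjk hk hj hj
  · rw [← Complex.ofReal_mul, ← Complex.ofReal_mul, Complex.ofReal_re, mul_comm (h _)]
  all_goals simp_all

end Spectral

section Support

variable {A B : Matrix (Fin d) (Fin d) ℂ}

theorem eigenvectorBasis_mem_range (hA : A.IsHermitian) {j : Fin d}
    (hj : hA.eigenvalues j ≠ 0) :
    ⇑(hA.eigenvectorBasis j) ∈ LinearMap.range A.mulVecLin := by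
  refine ⟨(hA.eigenvalues j)⁻¹ • ⇑(hA.eigenvectorBasis j), ?_⟩
  rw [Matrix.mulVecLin_apply, Matrix.mulVec_smul, hA.mulVec_eigenvectorBasis, smul_smul,
    inv_mul_cancel₀ hj, one_smul]

theorem inner_eigenvectorBasis_eq_zero_of_mem_range (hB : B.IsHermitian) {k : Fin d}
    (hk : hB.eigenvalues k = 0) {v : EuclideanSpace ℂ (Fin d)}
    (hv : ⇑v ∈ LinearMap.range B.mulVecLin) :
    inner ℂ (hB.eigenvectorBasis k) v = 0 := by
  obtain ⟨w, hw⟩ := hv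
  have hkernel : B *ᵥ ⇑(hB.eigenvectorBasis k) = 0 := by
    rw [hB.mulVec_eigenvectorBasis, hk, zero_smul]
  have hrow : star ⇑(hB.eigenvectorBasis k) ᵥ* B = 0 := by
    have := Matrix.star_mulVec (M := B) (v := ⇑(hB.eigenvectorBasis k))
    rw [hkernel, hB.eq] at this
    simpa using this.symm
  have hv' : v.ofLp = B *ᵥ w := hw.symm
  rw [EuclideanSpace.inner_eq_star_dotProduct, hv', dotProduct_comm, Matrix.dotProduct_mulVec,
    hrow, zero_dotProduct]

theorem sum_re_trace_rankOne_mul_rankOne (hA : A.IsHermitian) (hB : B.IsHermitian) (j : Fin d) :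
    ∑ k, (trace (rankOne (hA.eigenvectorBasis j) * rankOne (hB.eigenvectorBasis k))).re = 1 := by
  simp only [re_trace_rankOne_mul_rankOne, hB.eigenvectorBasis.sum_sq_norm_inner_left,
    hA.eigenvectorBasis.orthonormal.1, one_pow]

theorem sum_ite_re_trace_rankOne_mul_rankOne (hA : A.IsHermitian) (hB : B.PosSemidef)
    (hAB : LinearMap.range A.mulVecLin ≤ LinearMap.range B.mulVecLin) {j : Fin d}
    (hj : hA.eigenvalues j ≠ 0) :
    ∑ k, (if 0 < hB.1.eigenvalues k then
      (trace (rankOne (hA.eigenvectorBasis j) * rankOne (hB.1.eigenvectorBasis k))).re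
      else 0) = 1 := by
  rw [← sum_re_trace_rankOne_mul_rankOne hA hB.1 j]
  refine Finset.sum_congr rfl fun k _ => ?_
  split_ifs with hk
  · rfl
  · have hk0 := le_antisymm (not_lt.mp hk) (hB.eigenvalues_nonneg k)
    rw [re_trace_rankOne_mul_rankOne, ← norm_inner_symm,
      inner_eigenvectorBasis_eq_zero_of_mem_range hB.1 hk0 (hAB (eigenvectorBasis_mem_range hA hj)),
      norm_zero, zero_pow two_ne_zero]

theorem re_trace_matFun_mul_suppProj (g : ℝ → ℝ) (hA : A.IsHermitian) (hB : B.PosSemidef)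
    (hAB : LinearMap.range A.mulVecLin ≤ LinearMap.range B.mulVecLin) :
    (trace (matFun g hA * suppProj hB.1)).re = (trace (matFun g hA)).re := by
  rw [suppProj, re_trace_matFun_mul_matFun, re_trace_matFun]
  refine Finset.sum_congr rfl fun j _ => ?_
  split_ifs with hj
  · calc _ = g (hA.eigenvalues j) * ∑ k, (if 0 < hB.1.eigenvalues k then
            (trace (rankOne (hA.eigenvectorBasis j) * rankOne (hB.1.eigenvectorBasis k))).re
            else 0) := by
          rw [Finset.mul_sum]
          exact Finset.sum_congr rfl fun k _ => by
            simp only [hj, true_and, mul_ite, mul_zero, mul_one]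
      _ = g (hA.eigenvalues j) := by
          rw [sum_ite_re_trace_rankOne_mul_rankOne hA hB hAB hj.ne', mul_one]
  · simp [hj]

end Support

section Divergence

variable {ρ σ : Matrix (Fin d) (Fin d) ℂ}

section Linear

variable (hρ : ρ.IsHermitian) (hσ : σ.IsHermitian)

theorem Df_add (f g : ℝ → ℝ) :
    Df (fun x => f x + g x) hρ hσ = Df f hρ hσ + Df g hρ hσ := by
  simp only [Df, ← Finset.sum_add_distrib]
  refine Finset.sum_congr rfl fun j _ => Finset.sum_congr rfl fun k _ => ?_
  split_ifs <;> ring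

theorem Df_sub (f g : ℝ → ℝ) :
    Df (fun x => f x - g x) hρ hσ = Df f hρ hσ - Df g hρ hσ := by
  simp only [Df, ← Finset.sum_sub_distrib]
  refine Finset.sum_congr rfl fun j _ => Finset.sum_congr rfl fun k _ => ?_
  split_ifs <;> ring

theorem Df_const_mul (c : ℝ) (f : ℝ → ℝ) :
    Df (fun x => c * f x) hρ hσ = c * Df f hρ hσ := by
  simp only [Df, Finset.mul_sum]
  refine Finset.sum_congr rfl fun j _ => Finset.sum_congr rfl fun k _ => ?_
  split_ifs <;> ring

theorem Df_neg (f : ℝ → ℝ) : Df (fun x => -f x) hρ hσ = -Df f hρ hσ := by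
  simpa using Df_const_mul hρ hσ (-1) f

theorem Df_sum {ι : Type*} (s : Finset ι) (F : ι → ℝ → ℝ) :
    Df (fun x => ∑ i ∈ s, F i x) hρ hσ = ∑ i ∈ s, Df (F i) hρ hσ := by
  classical
  induction s using Finset.induction_on with
  | empty => simp [Df]
  | insert i s hi ih => simp only [Finset.sum_insert hi, Df_add, ih]

theorem Df_mono {f g : ℝ → ℝ} (hfg : ∀ x, 0 < x → f x ≤ g x) :
    Df f hρ hσ ≤ Df g hρ hσ := by
  refine Finset.sum_le_sum fun j _ => Finset.sum_le_sum fun k _ => ?_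
  split_ifs with h
  · rw [re_trace_rankOne_mul_rankOne]
    gcongr
    · exact h.1.le
    · exact hfg _ (div_pos h.2 h.1)
  · rfl

theorem re_trace_matFun_mul_matFun_eq_Df (f g h : ℝ → ℝ)
    (hfgh : ∀ a b, 0 < a → 0 < b → g a * h b = a * f (b / a)) :
    (trace (matFun g hρ * matFun h hσ)).re = Df f hρ hσ := by
  rw [re_trace_matFun_mul_matFun]
  refine Finset.sum_congr rfl fun j _ => Finset.sum_congr rfl fun k _ => ?_
  split_ifs with hjk
  · rw [hfgh _ _ hjk.1 hjk.2]
  · rfl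

end Linear

theorem Qzero_eq_Df (hρ : ρ.IsHermitian) (hσ : σ.PosSemidef) :
    Qzero hρ σ = Df (fun x => x) hρ hσ.1 := by
  rw [Qzero, suppProj]
  conv_lhs => rw [eq_matFun_id_of_posSemidef hσ]
  exact re_trace_matFun_mul_matFun_eq_Df hρ hσ.1 _ _ _ fun a b ha _ => by field_simp

theorem Qtwo_eq_Df (hρ : ρ.PosSemidef) (hσ : σ.IsHermitian) :
    Qtwo ρ hσ = Df (fun x => x⁻¹) hρ.1 hσ := by
  rw [Qtwo]
  conv_lhs => rw [eq_matFun_id_of_posSemidef hρ, matFun_mul_matFun]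
  exact re_trace_matFun_mul_matFun_eq_Df hρ.1 hσ _ _ _ fun a b ha hb => by field_simp

theorem Df_one (hρ : ρ.PosSemidef) (hσ : σ.PosSemidef)
    (hsupp : LinearMap.range ρ.mulVecLin ≤ LinearMap.range σ.mulVecLin) :
    Df (fun _ => 1) hρ.1 hσ.1 = (trace ρ).re := by
  rw [← re_trace_matFun_mul_matFun_eq_Df hρ.1 hσ.1 _ (fun y => y) (fun _ => 1)
    fun a b _ _ => by ring, ← suppProj, re_trace_matFun_mul_suppProj _ hρ.1 hσ hsupp,
    ← eq_matFun_id_of_posSemidef hρ]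

theorem Df_id (hρ : ρ.PosSemidef) (hσ : σ.PosSemidef)
    (hsupp : LinearMap.range σ.mulVecLin ≤ LinearMap.range ρ.mulVecLin) :
    Df (fun x => x) hρ.1 hσ.1 = (trace σ).re := by
  rw [← Qzero_eq_Df hρ.1 hσ, Qzero, Matrix.trace_mul_comm]
  nth_rewrite 1 [eq_matFun_id_of_posSemidef hσ]
  rw [re_trace_matFun_mul_suppProj _ hσ.1 hρ hsupp, ← eq_matFun_id_of_posSemidef hσ]

theorem relEnt_eq_Df (hρ : ρ.PosSemidef) (hσ : σ.PosSemidef)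
    (hsupp : LinearMap.range ρ.mulVecLin ≤ LinearMap.range σ.mulVecLin) :
    relEnt hρ.1 hσ.1 = Df (fun x => -Real.logb 2 x) hρ.1 hσ.1 := by
  have hρlog : (trace (ρ * matFun (Real.logb 2) hρ.1)).re =
      (trace (matFun (fun y => y * Real.logb 2 y) hρ.1 * suppProj hσ.1)).re := by
    rw [re_trace_matFun_mul_suppProj _ hρ.1 hσ hsupp, ← matFun_mul_matFun,
      ← eq_matFun_id_of_posSemidef hρ]
  rw [relEnt, Matrix.mul_sub, Matrix.trace_sub, Complex.sub_re, hρlog, suppProj]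
  conv_lhs => arg 2; rw [eq_matFun_id_of_posSemidef hρ]
  rw [re_trace_matFun_mul_matFun, re_trace_matFun_mul_matFun, Df, ← Finset.sum_sub_distrib]
  refine Finset.sum_congr rfl fun j _ => ?_
  rw [← Finset.sum_sub_distrib]
  refine Finset.sum_congr rfl fun k _ => ?_
  split_ifs with hjk
  · rw [Real.logb_div hjk.2.ne' hjk.1.ne']
    ring
  · ring

end Divergence

theorem ft_le_sub_one {t x : ℝ} (ht : t ∈ Set.Icc (0 : ℝ) 1) (hx : 0 < x) : ft t x ≤ x - 1 := by
  have hden : 0 < t * (x - 1) + 1 := by nlinarith [mul_nonneg ht.1 hx.le, ht.2]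
  rw [ft, div_le_iff₀ hden]
  nlinarith [mul_nonneg ht.1 (sq_nonneg (x - 1))]

section States

variable {ρ σ : Matrix (Fin d) (Fin d) ℂ}

theorem Df_ft_nonpos (hρ : IsState ρ) (hσ : IsState σ)
    (hsupp : LinearMap.range ρ.mulVecLin = LinearMap.range σ.mulVecLin) {t : ℝ}
    (ht : t ∈ Set.Icc (0 : ℝ) 1) : Df (ft t) hρ.1.1 hσ.1.1 ≤ 0 :=
  calc Df (ft t) hρ.1.1 hσ.1.1 ≤ Df (fun x => x - 1) hρ.1.1 hσ.1.1 :=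
        Df_mono _ _ fun _ hx => ft_le_sub_one ht hx
    _ = 0 := by
        rw [Df_sub, Df_id hρ.1 hσ.1 hsupp.ge, Df_one hρ.1 hσ.1 hsupp.le, hρ.2, hσ.2, sub_self]

theorem relEnt_le_Df_le_of_approx (hρ : ρ.PosSemidef) (hσ : σ.PosSemidef)
    (hsupp : LinearMap.range ρ.mulVecLin ≤ LinearMap.range σ.mulVecLin) {r : ℝ → ℝ} {c : ℝ}
    (hc : 0 ≤ c)
    (hr : ∀ x > (0 : ℝ), -r x - c * (1 / x + x - 2) ≤ -Real.logb 2 x ∧ -Real.logb 2 x ≤ -r x) :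
    relEnt hρ.1 hσ.1 ≤ Df (fun x => -r x) hρ.1 hσ.1 ∧
      Df (fun x => -r x) hρ.1 hσ.1 ≤ relEnt hρ.1 hσ.1 + c * (Qzero hρ.1 σ + Qtwo ρ hσ.1) := by
  rw [relEnt_eq_Df hρ hσ hsupp, Qzero_eq_Df hρ.1 hσ, Qtwo_eq_Df hρ hσ.1, add_comm (Df _ _ _),
    ← Df_add, ← Df_const_mul, ← Df_add]
  refine ⟨Df_mono _ _ fun x hx => (hr x hx).2, Df_mono _ _ fun x hx => ?_⟩
  have := (hr x hx).1
  rw [one_div] at this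
  nlinarith [inv_pos.mpr hx]

end States

theorem abs_sub_div_le_of_bounds {D S S' E ε : ℝ} (hD : 0 < D) (hε : 0 ≤ ε) (hDS : D ≤ S)
    (hSE : S ≤ D + E) (hS' : |S' - S| ≤ ε * S) :
    |S' - D| / D ≤ E / D * (1 + ε) + ε := by
  rw [div_le_iff₀ hD, add_mul, div_mul_eq_mul_div, div_mul_cancel₀ _ hD.ne']
  have := mul_le_mul_of_nonneg_left hSE hε
  calc |S' - D| ≤ |S' - S| + |S - D| := abs_sub_le _ _ _
    _ ≤ ε * S + (S - D) := by rw [abs_of_nonneg (sub_nonneg.mpr hDS)]; gcongr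
    _ ≤ _ := by nlinarith

theorem abs_neg_sum_mul_sub_le {ι : Type*} [Fintype ι] {ε : ℝ} {c x y : ι → ℝ}
    (hc : ∀ i, 0 ≤ c i) (hy : ∀ i, y i ≤ 0) (hxy : ∀ i, |x i - y i| ≤ ε * |y i|) :
    |(-∑ i, c i * x i) - -∑ i, c i * y i| ≤ ε * -∑ i, c i * y i := by
  rw [neg_sub_neg, ← Finset.sum_sub_distrib, ← Finset.sum_neg_distrib, Finset.mul_sum]
  refine (Finset.abs_sum_le_sum_abs _ _).trans (Finset.sum_le_sum fun i _ => ?_)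
  rw [← mul_sub, abs_mul, abs_of_nonneg (hc i), abs_sub_comm]
  calc c i * |x i - y i| ≤ c i * (ε * |y i|) := mul_le_mul_of_nonneg_left (hxy i) (hc i)
    _ = ε * -(c i * y i) := by rw [abs_of_nonpos (hy i)]; ring

theorem error_bound_relEnt_general (ρ σ : Matrix (Fin d) (Fin d) ℂ)
    (hρ : IsState ρ) (hσ : IsState σ)
    (hsupp : LinearMap.range ρ.mulVecLin = LinearMap.range σ.mulVecLin)
    (hD : 0 < relEnt hρ.1.1 hσ.1.1)
    (m : ℕ) (t w : Fin m → ℝ)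
    (ht : ∀ j, t j ∈ Set.Icc (0 : ℝ) 1) (hw : ∀ j, 0 < w j)
    (happrox : ∀ x > (0 : ℝ),
      -((1 / Real.log 2) * ∑ j, w j * ft (t j) x) -
          (1 / ((m : ℝ) ^ 2 * Real.log 2)) * (1 / x + x - 2) ≤ -Real.logb 2 x ∧
        -Real.logb 2 x ≤ -((1 / Real.log 2) * ∑ j, w j * ft (t j) x))
    (εV : ℝ) (hεV : 0 ≤ εV) (Dhat : Fin m → ℝ)
    (hest : ∀ j, |Dhat j - Df (ft (t j)) hρ.1.1 hσ.1.1| ≤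
      εV * |Df (ft (t j)) hρ.1.1 hσ.1.1|) :
    |(-∑ j, (w j / Real.log 2) * Dhat j) - relEnt hρ.1.1 hσ.1.1| /
        relEnt hρ.1.1 hσ.1.1 ≤
      ((Qzero hρ.1.1 σ + Qtwo ρ hσ.1.1) / (relEnt hρ.1.1 hσ.1.1 * Real.log 2)) *
          (1 + εV) / (m : ℝ) ^ 2 + εV := by
  have hL : 0 < Real.log 2 := Real.log_pos one_lt_two
  obtain ⟨hDS, hSE⟩ := relEnt_le_Df_le_of_approx hρ.1 hσ.1 hsupp.le (by positivity) happrox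
  have hS : Df (fun x => -((1 / Real.log 2) * ∑ j, w j * ft (t j) x)) hρ.1.1 hσ.1.1 =
      -∑ j, (w j / Real.log 2) * Df (ft (t j)) hρ.1.1 hσ.1.1 := by
    simp only [Df_neg, Df_const_mul, Df_sum, Finset.mul_sum]
    exact congrArg _ (Finset.sum_congr rfl fun j _ => by ring)
  rw [hS] at hDS hSE
  have hest' := abs_neg_sum_mul_sub_le (fun j => (div_pos (hw j) hL).le)
    (fun j => Df_ft_nonpos hρ hσ hsupp (ht j)) hest
  calc _ ≤ _ := abs_sub_div_le_of_bounds hD hεV hDS hSE hest'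
    _ = _ := by ring

/-- Error bound for estimating the quantum relative entropy (Proposition 1):
`|D̂(ρ‖σ) − D(ρ‖σ)|/D(ρ‖σ) ≤ C (1+ε_V)/m² + ε_V` with
`C = (Q₀(ρ‖σ) + Q₂(ρ‖σ))/(D(ρ‖σ) ln 2)`. -/
theorem error_bound_relEnt (ρ σ : Matrix (Fin d) (Fin d) ℂ)
    (hρ : IsState ρ) (hσ : IsState σ)
    (hsupp : LinearMap.range ρ.mulVecLin = LinearMap.range σ.mulVecLin)
    (hD : 0 < relEnt hρ.1.1 hσ.1.1)
    (m : ℕ) (hm : 1 ≤ m) (t w : Fin m → ℝ)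
    (ht : ∀ j, t j ∈ Set.Icc (0 : ℝ) 1) (hw : ∀ j, 0 < w j)
    (happrox : ∀ x > (0 : ℝ),
      -((1 / Real.log 2) * ∑ j, w j * ft (t j) x) -
          (1 / ((m : ℝ) ^ 2 * Real.log 2)) * (1 / x + x - 2) ≤ -Real.logb 2 x ∧
        -Real.logb 2 x ≤ -((1 / Real.log 2) * ∑ j, w j * ft (t j) x))
    (εV : ℝ) (hεV : 0 ≤ εV) (Dhat : Fin m → ℝ)
    (hest : ∀ j, |Dhat j - Df (ft (t j)) hρ.1.1 hσ.1.1| ≤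
      εV * |Df (ft (t j)) hρ.1.1 hσ.1.1|) :
    |(-∑ j, (w j / Real.log 2) * Dhat j) - relEnt hρ.1.1 hσ.1.1| /
        relEnt hρ.1.1 hσ.1.1 ≤
      ((Qzero hρ.1.1 σ + Qtwo ρ hσ.1.1) / (relEnt hρ.1.1 hσ.1.1 * Real.log 2)) *
          (1 + εV) / (m : ℝ) ^ 2 + εV :=
  error_bound_relEnt_general ρ σ hρ hσ hsupp hD m t w ht hw happrox εV hεV Dhat hest

end QRE
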